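/- arXiv:math/0409381 — 2 statements merged into one kernel-verified Lean document; each statement's English description precedes it below -/
import Mathlib

section
/- If translates of bricks A = ∏_j (-a_j/2,a_j/2) and B = ∏_j (-b_j/2,b_j/2) tile Q = (-1/2,1/2)^d, and neither 1/a_j ∈ Z for all j nor 1/b_j ∈ Z for all j (i.e. neither brick alone tiles Q by the trivial grid tiling), then there exists an index k such that 1/a_j ∈ Z and 1/b_j ∈ Z for all j ≠ k. -/
/-!
Integrate the tiling identity against `x ↦ ∏ j, cos (2π u_j x_j)`. The integral over a translated
brick factors over the coordinates, and a factor of width `c` vanishes at the frequency `u_j = 1/c`,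
since the interval then covers exactly one period. For the unit cube the `j`-th factor is
`sinc (π u_j)`, which vanishes only when `u_j` is a nonzero integer. So if `1/a_i` and `1/b_m`
were both non-integers for some `i ≠ m`, the frequency `u = e_i / a_i + e_m / b_m` would kill every
brick on the left-hand side but not the cube on the right.
-/

open MeasureTheory Real Set

lemma integral_Ioo_cos_two_pi_mul {α β : ℝ} (hαβ : α ≤ β) {u : ℝ} (hu : u ≠ 0) :
    ∫ t in Ioo α β, cos (2 * π * u * t)
      = (sin (2 * π * u * β) - sin (2 * π * u * α)) / (2 * π * u) := by
  have h : 2 * π * u ≠ 0 := by positivity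
  rw [← integral_Ioc_eq_integral_Ioo, ← intervalIntegral.integral_of_le hαβ,
    intervalIntegral.integral_comp_mul_left (fun t => cos t) h, integral_cos, smul_eq_mul]
  field_simp

lemma integral_Ioo_cos_two_pi_inv_width (c l : ℝ) :
    ∫ t in Ioo (l - c / 2) (l + c / 2), cos (2 * π * c⁻¹ * t) = 0 := by
  rcases le_or_gt c 0 with hc | hc
  · simp [Ioo_eq_empty (by linarith : ¬ l - c / 2 < l + c / 2)]
  have hperiod : 2 * π * c⁻¹ * (l + c / 2) = 2 * π * c⁻¹ * (l - c / 2) + 2 * π := by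
    field_simp
    ring
  rw [integral_Ioo_cos_two_pi_mul (by linarith) (inv_ne_zero hc.ne'), hperiod, sin_add_two_pi,
    sub_self, zero_div]

lemma integral_Ioo_neg_half_half_cos (u : ℝ) :
    ∫ t in Ioo (-(1 / 2) : ℝ) (1 / 2), cos (2 * π * u * t) = sinc (π * u) := by
  rcases eq_or_ne u 0 with rfl | hu
  · norm_num
  rw [integral_Ioo_cos_two_pi_mul (by norm_num) hu, sinc_of_ne_zero (by positivity),
    show 2 * π * u * -(1 / 2) = -(π * u) by ring, show 2 * π * u * (1 / 2) = π * u by ring,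
    sin_neg]
  field_simp
  ring

lemma sinc_pi_mul_ne_zero {u : ℝ} (hu : ∀ n : ℤ, n ≠ 0 → u ≠ n) : sinc (π * u) ≠ 0 := by
  rcases eq_or_ne u 0 with rfl | hu0
  · simp
  rw [sinc_of_ne_zero (by positivity)]
  refine div_ne_zero (fun hsin => ?_) (by positivity)
  obtain ⟨n, hn⟩ := sin_eq_zero_iff.mp hsin
  have hun : u = n := mul_left_cancel₀ pi_ne_zero (hn.symm.trans (mul_comm _ _))
  exact hu n (fun hn0 => hu0 (by simpa [hn0] using hun)) hun

section Brick

variable {ι : Type*}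

def brick (c : ι → ℝ) : Set (EuclideanSpace ℝ ι) := {x | ∀ j, x j ∈ Ioo (-(c j) / 2) (c j / 2)}

lemma sub_mem_brick_iff {c : ι → ℝ} {x l : EuclideanSpace ℝ ι} :
    x - l ∈ brick c ↔ ∀ j, x j ∈ Ioo (l j - c j / 2) (l j + c j / 2) := by
  simp only [brick, mem_ofPred_eq, mem_Ioo, PiLp.sub_apply]
  refine forall_congr' fun j => and_congr ?_ ?_ <;> constructor <;> intro h <;> linarith

variable [Fintype ι]

lemma indicator_brick_sub_mul_prod (c : ι → ℝ) (l x : EuclideanSpace ℝ ι) (f : ι → ℝ → ℝ) :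
    (brick c).indicator (fun _ => (1 : ℝ)) (x - l) * ∏ j, f j (x j)
      = ∏ j, (Ioo (l j - c j / 2) (l j + c j / 2)).indicator (f j) (x j) := by
  by_cases hx : x - l ∈ brick c
  · rw [indicator_of_mem hx, one_mul]
    exact Finset.prod_congr rfl fun j _ => (indicator_of_mem (sub_mem_brick_iff.mp hx j) _).symm
  · obtain ⟨j, hj⟩ := not_forall.mp (mt sub_mem_brick_iff.mpr hx)
    rw [indicator_of_notMem hx, zero_mul]
    exact (Finset.prod_eq_zero (Finset.mem_univ j) (indicator_of_notMem hj _)).symm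

lemma integral_indicator_brick_sub_mul_prod (c : ι → ℝ) (l : EuclideanSpace ℝ ι)
    (f : ι → ℝ → ℝ) :
    ∫ x, (brick c).indicator (fun _ => (1 : ℝ)) (x - l) * ∏ j, f j (x j)
      = ∏ j, ∫ t in Ioo (l j - c j / 2) (l j + c j / 2), f j t := by
  simp_rw [indicator_brick_sub_mul_prod]
  rw [(PiLp.volume_preserving_ofLp ι).integral_comp
      (MeasurableEquiv.toLp 2 (ι → ℝ)).symm.measurableEmbedding
      (fun y => ∏ j, (Ioo (l j - c j / 2) (l j + c j / 2)).indicator (f j) (y j)),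
    integral_fintype_prod_volume_eq_prod]
  exact Finset.prod_congr rfl fun j _ => integral_indicator measurableSet_Ioo

lemma integrable_indicator_brick_sub_mul_prod (c : ι → ℝ) (l : EuclideanSpace ℝ ι)
    {f : ι → ℝ → ℝ} (hf : ∀ j, LocallyIntegrable (f j)) :
    Integrable fun x => (brick c).indicator (fun _ => (1 : ℝ)) (x - l) * ∏ j, f j (x j) := by
  simp_rw [indicator_brick_sub_mul_prod]
  have hpi : Integrable fun y : ι → ℝ =>
      ∏ j, (Ioo (l j - c j / 2) (l j + c j / 2)).indicator (f j) (y j) :=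
    Integrable.fintype_prod fun j => (integrable_indicator_iff measurableSet_Ioo).mpr
      (((hf j).integrableOn_isCompact isCompact_Icc).mono_set Ioo_subset_Icc_self)
  exact ((PiLp.volume_preserving_ofLp ι).integrable_comp_emb
    (MeasurableEquiv.toLp 2 (ι → ℝ)).symm.measurableEmbedding).mpr hpi

theorem sum_prod_integral_eq_of_tiling {a b : ι → ℝ} {Λa Λb : Finset (EuclideanSpace ℝ ι)}
    (htile : ∀ᵐ x : EuclideanSpace ℝ ι,
      (∑ l ∈ Λa, (brick a).indicator (fun _ => (1 : ℝ)) (x - l)) +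
      (∑ l ∈ Λb, (brick b).indicator (fun _ => (1 : ℝ)) (x - l)) =
      (brick fun _ => 1).indicator (fun _ => (1 : ℝ)) x)
    {f : ι → ℝ → ℝ} (hf : ∀ j, LocallyIntegrable (f j)) :
    (∑ l ∈ Λa, ∏ j, ∫ t in Ioo (l j - a j / 2) (l j + a j / 2), f j t) +
      (∑ l ∈ Λb, ∏ j, ∫ t in Ioo (l j - b j / 2) (l j + b j / 2), f j t) =
      ∏ j, ∫ t in Ioo (-(1 / 2) : ℝ) (1 / 2), f j t := by
  have hint c l := integrable_indicator_brick_sub_mul_prod c l hf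
  calc _ = ∫ x, ((∑ l ∈ Λa, (brick a).indicator (fun _ => (1 : ℝ)) (x - l)) +
          (∑ l ∈ Λb, (brick b).indicator (fun _ => (1 : ℝ)) (x - l))) * ∏ j, f j (x j) := by
        simp_rw [add_mul, Finset.sum_mul]
        rw [integral_add (integrable_finsetSum _ fun l _ => hint a l)
            (integrable_finsetSum _ fun l _ => hint b l),
          integral_finsetSum _ fun l _ => hint a l, integral_finsetSum _ fun l _ => hint b l]
        simp only [integral_indicator_brick_sub_mul_prod]
    _ = ∫ x, (brick fun _ => 1).indicator (fun _ => (1 : ℝ)) (x - 0) * ∏ j, f j (x j) :=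
        integral_congr_ae (htile.mono fun x hx => by simp only [hx, sub_zero])
    _ = _ := by
        rw [integral_indicator_brick_sub_mul_prod]
        norm_num

theorem exists_int_inv_of_tiling {a b : ι → ℝ}
    {Λa Λb : Finset (EuclideanSpace ℝ ι)}
    (htile : ∀ᵐ x : EuclideanSpace ℝ ι,
      (∑ l ∈ Λa, (brick a).indicator (fun _ => (1 : ℝ)) (x - l)) +
      (∑ l ∈ Λb, (brick b).indicator (fun _ => (1 : ℝ)) (x - l)) =
      (brick fun _ => 1).indicator (fun _ => (1 : ℝ)) x)
    {i m : ι} (him : i ≠ m) (hai : ∀ n : ℤ, (a i)⁻¹ ≠ n) : ∃ n : ℤ, (b m)⁻¹ = n := by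
  classical
  by_contra! hbm
  set u : ι → ℝ := Function.update (Function.update 0 i (a i)⁻¹) m (b m)⁻¹
  have hui : u i = (a i)⁻¹ := by simp [u, him]
  have hum : u m = (b m)⁻¹ := by simp [u]
  have key := sum_prod_integral_eq_of_tiling htile
    (f := fun j t => cos (2 * π * u j * t)) fun j => (by fun_prop : Continuous _).locallyIntegrable
  have hA : ∀ l ∈ Λa, ∏ j, ∫ t in Ioo (l j - a j / 2) (l j + a j / 2), cos (2 * π * u j * t) = 0 :=
    fun l _ => Finset.prod_eq_zero (Finset.mem_univ i) <| by
      rw [hui]; exact integral_Ioo_cos_two_pi_inv_width (a i) (l i)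
  have hB : ∀ l ∈ Λb, ∏ j, ∫ t in Ioo (l j - b j / 2) (l j + b j / 2), cos (2 * π * u j * t) = 0 :=
    fun l _ => Finset.prod_eq_zero (Finset.mem_univ m) <| by
      rw [hum]; exact integral_Ioo_cos_two_pi_inv_width (b m) (l m)
  rw [Finset.sum_eq_zero hA, Finset.sum_eq_zero hB, add_zero, eq_comm] at key
  refine Finset.prod_ne_zero_iff.mpr (fun j _ => ?_) key
  rw [integral_Ioo_neg_half_half_cos]
  refine sinc_pi_mul_ne_zero fun n hn0 => ?_
  by_cases hjm : j = m
  · exact hjm ▸ hum ▸ hbm n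
  by_cases hji : j = i
  · exact hji ▸ hui ▸ hai n
  simpa [u, hjm, hji, eq_comm] using hn0

end Brick

theorem tiling_two_bricks_integrality_off_one_index_general (d : ℕ)
    (a b : Fin d → ℝ)
    (A B Q : Set (EuclideanSpace ℝ (Fin d)))
    (hA : A = {x : EuclideanSpace ℝ (Fin d) | ∀ j, x j ∈ Set.Ioo (-(a j) / 2) (a j / 2)})
    (hB : B = {x : EuclideanSpace ℝ (Fin d) | ∀ j, x j ∈ Set.Ioo (-(b j) / 2) (b j / 2)})
    (hQ : Q = {x : EuclideanSpace ℝ (Fin d) | ∀ j, x j ∈ Set.Ioo (-(1 : ℝ) / 2) (1 / 2)})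
    (Λa Λb : Finset (EuclideanSpace ℝ (Fin d)))
    (htile : ∀ᵐ x : EuclideanSpace ℝ (Fin d),
      (∑ l ∈ Λa, A.indicator (fun _ => (1 : ℝ)) (x - l)) +
      (∑ l ∈ Λb, B.indicator (fun _ => (1 : ℝ)) (x - l)) =
      Q.indicator (fun _ => (1 : ℝ)) x)
    (hnota : ¬ ∀ j, ∃ n : ℤ, (a j)⁻¹ = n)
    (hnotb : ¬ ∀ j, ∃ n : ℤ, (b j)⁻¹ = n) :
    ∃ k : Fin d, ∀ j : Fin d, j ≠ k →
      (∃ n : ℤ, (a j)⁻¹ = n) ∧ (∃ n : ℤ, (b j)⁻¹ = n) := by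
  subst hA hB hQ
  have hswap := htile.mono fun x hx => (add_comm _ _).trans hx
  push Not at hnota hnotb
  obtain ⟨i, hai⟩ := hnota
  obtain ⟨m, hbm⟩ := hnotb
  obtain rfl : m = i := by
    by_contra hmi
    obtain ⟨n, hn⟩ := exists_int_inv_of_tiling htile (Ne.symm hmi) hai
    exact hbm n hn
  exact ⟨m, fun j hj => ⟨exists_int_inv_of_tiling hswap hj.symm hbm,
    exists_int_inv_of_tiling htile hj.symm hai⟩⟩

/-- If bricks `A` and `B` tile the unit cube `Q = (-1/2,1/2)^d` and neither all `1 / a j`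
nor all `1 / b j` are integers, then there is one index `k` such that `1 / a j` and
`1 / b j` are integers for all `j ≠ k`. -/
theorem tiling_two_bricks_integrality_off_one_index (d : ℕ) (hd : 2 ≤ d)
    (a b : Fin d → ℝ) (ha : ∀ j, 0 < a j) (hb : ∀ j, 0 < b j)
    (A B Q : Set (EuclideanSpace ℝ (Fin d)))
    (hA : A = {x : EuclideanSpace ℝ (Fin d) | ∀ j, x j ∈ Set.Ioo (-(a j) / 2) (a j / 2)})
    (hB : B = {x : EuclideanSpace ℝ (Fin d) | ∀ j, x j ∈ Set.Ioo (-(b j) / 2) (b j / 2)})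
    (hQ : Q = {x : EuclideanSpace ℝ (Fin d) | ∀ j, x j ∈ Set.Ioo (-(1 : ℝ) / 2) (1 / 2)})
    (Λa Λb : Finset (EuclideanSpace ℝ (Fin d)))
    (htile : ∀ᵐ x : EuclideanSpace ℝ (Fin d),
      (∑ l ∈ Λa, A.indicator (fun _ => (1 : ℝ)) (x - l)) +
      (∑ l ∈ Λb, B.indicator (fun _ => (1 : ℝ)) (x - l)) =
      Q.indicator (fun _ => (1 : ℝ)) x)
    (hnota : ¬ ∀ j, ∃ n : ℤ, (a j)⁻¹ = n)
    (hnotb : ¬ ∀ j, ∃ n : ℤ, (b j)⁻¹ = n) :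
    ∃ k : Fin d, ∀ j : Fin d, j ≠ k →
      (∃ n : ℤ, (a j)⁻¹ = n) ∧ (∃ n : ℤ, (b j)⁻¹ = n) :=
  tiling_two_bricks_integrality_off_one_index_general d a b A B Q hA hB hQ Λa Λb htile hnota hnotb
end

section
/- If translates of a single brick C = ∏_j (0,c_j) tile a box Q = ∏_j (0,q_j) in R^d, then for each j, q_j/c_j is a positive integer, and the tiling can be taken to be the grid tiling. -/
/-!
Fix a direction `j` and integrate the tiling identity against the character
`x ↦ exp (2πi x_j / c_j)`. Over every translate of the brick this integral vanishes, because in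
direction `j` it runs over a full period; over the box it equals
`(∏_{i ≠ j} q_i) · ∫_0^{q_j} exp (2πi t / c_j) dt`, which vanishes only if `q_j ∈ c_j ℤ`.
Once `q_j = n_j c_j`, the grid tiling reduces coordinatewise to the fact that the intervals
`(k c, (k + 1) c)`, `k < n`, cover `(0, n c)` up to finitely many points.
-/

open MeasureTheory Set Filter Real Complex

theorem indicator_Ioo_zero_sub (a b t : ℝ) :
    (Ioo 0 b).indicator (1 : ℝ → ℝ) (t - a) = (Ioo a (a + b)).indicator 1 t := by
  rw [show Ioo a (a + b) = (· - a) ⁻¹' Ioo 0 b by simp [add_comm]]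
  rfl

theorem ofReal_indicator_one_mul (s : Set ℝ) (f : ℝ → ℂ) (t : ℝ) :
    ((s.indicator 1 t : ℝ) : ℂ) * f t = s.indicator f t := by
  by_cases h : t ∈ s <;> simp [h]

theorem indicator_Ioo_add_indicator_Ioo {a b c t : ℝ} (hab : a ≤ b) (hbc : b ≤ c) (ht : t ≠ b) :
    (Ioo a b).indicator (1 : ℝ → ℝ) t + (Ioo b c).indicator 1 t = (Ioo a c).indicator 1 t := by
  simp only [indicator, mem_Ioo, Pi.one_apply]
  split_ifs <;> grind

theorem sum_range_indicator_Ioo_sub_mul {c : ℝ} (hc : 0 < c) (n : ℕ) {t : ℝ}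
    (ht : ∀ m : ℕ, t ≠ c * m) :
    ∑ k ∈ Finset.range n, (Ioo 0 c).indicator (1 : ℝ → ℝ) (t - c * k)
      = (Ioo 0 (c * n)).indicator 1 t := by
  induction n with
  | zero => simp
  | succ n ih =>
    rw [Finset.sum_range_succ, ih, indicator_Ioo_zero_sub, Nat.cast_succ, mul_add_one,
      indicator_Ioo_add_indicator_Ioo (by positivity) (by linarith) (ht n)]

theorem ae_sum_range_indicator_Ioo_sub_mul {c : ℝ} (hc : 0 < c) (n : ℕ) :
    ∀ᵐ t : ℝ, ∑ k ∈ Finset.range n, (Ioo 0 c).indicator (1 : ℝ → ℝ) (t - c * k)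
      = (Ioo 0 (c * n)).indicator 1 t := by
  filter_upwards [ae_all_iff.2 fun m : ℕ => Measure.ae_ne volume (c * m)] with t ht
  exact sum_range_indicator_Ioo_sub_mul hc n ht

theorem integral_cexp_two_pi_I_div_eq_zero_iff {c : ℝ} (hc : c ≠ 0) (a b : ℝ) :
    ∫ t in a..a + b, cexp (2 * π * I / c * t) = 0 ↔ ∃ n : ℤ, b = n * c := by
  have hk : 2 * π * I / c ≠ 0 := div_ne_zero two_pi_I_ne_zero (ofReal_ne_zero.2 hc)
  rw [integral_exp_mul_complex hk, div_eq_zero_iff, or_iff_left hk, sub_eq_zero, ofReal_add,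
    mul_add, Complex.exp_add, mul_eq_left₀ (Complex.exp_ne_zero _), Complex.exp_eq_one_iff]
  refine exists_congr fun n => ?_
  rw [show 2 * π * I / c * b = 2 * π * I * (b / c) by ring, mul_comm (n : ℂ),
    mul_right_inj' two_pi_I_ne_zero, div_eq_iff (ofReal_ne_zero.2 hc)]
  exact_mod_cast Iff.rfl

namespace EuclideanSpace

variable {ι : Type*} [Fintype ι]

def brick (b : ι → ℝ) : Set (EuclideanSpace ℝ ι) := {y | ∀ i, y i ∈ Ioo 0 (b i)}

theorem indicator_brick_apply (b : ι → ℝ) (x : EuclideanSpace ℝ ι) :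
    (brick b).indicator (fun _ => (1 : ℝ)) x = ∏ i, (Ioo 0 (b i)).indicator 1 (x i) := by
  classical
  simp [brick, Set.indicator, Finset.prod_boole]

theorem integral_prod_apply (f : ι → ℝ → ℂ) :
    ∫ x : EuclideanSpace ℝ ι, ∏ i, f i (x i) = ∏ i, ∫ t, f i t :=
  ((PiLp.volume_preserving_toLp ι).integral_comp
    (MeasurableEquiv.toLp 2 (ι → ℝ)).measurableEmbedding
    (fun x : EuclideanSpace ℝ ι => ∏ i, f i (x i))).symm.trans
    (integral_fintype_prod_volume_eq_prod f)

theorem integrable_prod_apply {f : ι → ℝ → ℂ} (hf : ∀ i, Integrable (f i)) :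
    Integrable fun x : EuclideanSpace ℝ ι => ∏ i, f i (x i) :=
  ((PiLp.volume_preserving_toLp ι).integrable_comp_emb
    (MeasurableEquiv.toLp 2 (ι → ℝ)).measurableEmbedding).1 (Integrable.fintype_prod hf)

theorem ae_apply_of_ae {P : ℝ → Prop} (h : ∀ᵐ t, P t) (j : ι) :
    ∀ᵐ x : EuclideanSpace ℝ ι, P (x j) :=
  (PiLp.volume_preserving_ofLp ι).quasiMeasurePreserving.tendsto_ae.eventually
    (Measure.tendsto_eval_ae_ae.eventually h)

variable [DecidableEq ι]

theorem indicator_brick_sub_mul_eq_prod (a x : EuclideanSpace ℝ ι) (b : ι → ℝ) (j : ι)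
    (f : ℝ → ℂ) :
    (((brick b).indicator (fun _ => (1 : ℝ)) (x - a) : ℝ) : ℂ) * f (x j)
      = ∏ i, (Ioo (a i) (a i + b i)).indicator ((Pi.mulSingle j f : ι → ℝ → ℂ) i) (x i) := by
  have hf_prod : f (x j) = ∏ i, (Pi.mulSingle j f : ι → ℝ → ℂ) i (x i) := by
    rw [Fintype.prod_eq_single j fun i hi => by simp [hi]]
    simp
  rw [indicator_brick_apply, ofReal_prod, hf_prod, ← Finset.prod_mul_distrib]
  refine Finset.prod_congr rfl fun i _ => ?_
  rw [PiLp.sub_apply, indicator_Ioo_zero_sub, ofReal_indicator_one_mul]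

theorem integral_indicator_brick_sub_mul (a : EuclideanSpace ℝ ι) {b : ι → ℝ}
    (hb : ∀ i, 0 ≤ b i) (j : ι) (f : ℝ → ℂ) :
    ∫ x : EuclideanSpace ℝ ι, (((brick b).indicator (fun _ => (1 : ℝ)) (x - a) : ℝ) : ℂ) * f (x j)
      = (∏ i ∈ Finset.univ.erase j, (b i : ℂ)) * ∫ t in a j..a j + b j, f t := by
  have h_factor : ∀ i, ∫ t, (Ioo (a i) (a i + b i)).indicator ((Pi.mulSingle j f : ι → ℝ → ℂ) i) t
      = ∫ t in a i..a i + b i, (Pi.mulSingle j f : ι → ℝ → ℂ) i t := fun i => by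
    rw [integral_indicator measurableSet_Ioo, ← integral_Ioc_eq_integral_Ioo,
      intervalIntegral.integral_of_le (by linarith [hb i])]
  simp_rw [indicator_brick_sub_mul_eq_prod, integral_prod_apply, h_factor,
    ← Finset.prod_erase_mul _ _ (Finset.mem_univ j)]
  congr 1
  · refine Finset.prod_congr rfl fun i hi => ?_
    simp [Finset.ne_of_mem_erase hi]
  · simp

theorem integrable_indicator_brick_sub_mul (a : EuclideanSpace ℝ ι) (b : ι → ℝ) (j : ι)
    {f : ℝ → ℂ} (hf : LocallyIntegrable f) :
    Integrable fun x : EuclideanSpace ℝ ι =>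
      (((brick b).indicator (fun _ => (1 : ℝ)) (x - a) : ℝ) : ℂ) * f (x j) := by
  simp_rw [indicator_brick_sub_mul_eq_prod]
  refine integrable_prod_apply fun i => ?_
  have hfi : LocallyIntegrable ((Pi.mulSingle j f : ι → ℝ → ℂ) i) := by
    rcases eq_or_ne i j with rfl | hij
    · simpa
    · rw [Pi.mulSingle_eq_of_ne hij]
      exact locallyIntegrable_const 1
  rw [integrable_indicator_iff measurableSet_Ioo]
  exact (hfi.integrableOn_isCompact isCompact_Icc).mono_set Ioo_subset_Icc_self

theorem exists_nat_eq_mul_of_tiling {c q : ι → ℝ} (hc : ∀ j, 0 < c j) (hq : ∀ j, 0 < q j)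
    {Λ : Finset (EuclideanSpace ℝ ι)}
    (htile : ∀ᵐ x : EuclideanSpace ℝ ι,
      ∑ l ∈ Λ, (brick c).indicator (fun _ => (1 : ℝ)) (x - l)
        = (brick q).indicator (fun _ => (1 : ℝ)) x)
    (j : ι) : ∃ n : ℕ, 0 < n ∧ q j = c j * n := by
  set e : ℝ → ℂ := fun t => cexp (2 * π * I / c j * t)
  have he : LocallyIntegrable e := (by fun_prop : Continuous e).locallyIntegrable
  have h_brick : ∀ l : EuclideanSpace ℝ ι, ∫ x : EuclideanSpace ℝ ι,
      (((brick c).indicator (fun _ => (1 : ℝ)) (x - l) : ℝ) : ℂ) * e (x j) = 0 := fun l => by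
    rw [integral_indicator_brick_sub_mul l (fun i => (hc i).le),
      (integral_cexp_two_pi_I_div_eq_zero_iff (hc j).ne' _ _).2 ⟨1, by simp⟩, mul_zero]
  have h_box : ∫ x : EuclideanSpace ℝ ι,
      (((brick q).indicator (fun _ => (1 : ℝ)) (x - 0) : ℝ) : ℂ) * e (x j) = 0 := by
    rw [← Finset.sum_eq_zero fun l _ => h_brick l, ← integral_finsetSum Λ fun l _ =>
      integrable_indicator_brick_sub_mul l c j he]
    refine integral_congr_ae ?_
    filter_upwards [htile] with x hx
    simp only [sub_zero, ← hx, ofReal_sum, Finset.sum_mul]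
  rw [integral_indicator_brick_sub_mul 0 (fun i => (hq i).le), mul_eq_zero,
    Finset.prod_eq_zero_iff, PiLp.zero_apply] at h_box
  obtain ⟨i, -, hi⟩ | h_period := h_box
  · exact absurd hi (ofReal_ne_zero.2 (hq i).ne')
  obtain ⟨n, hn⟩ := (integral_cexp_two_pi_I_div_eq_zero_iff (hc j).ne' _ _).1 h_period
  have hn_pos : 0 < n := by
    have hqj := hq j
    rw [hn] at hqj
    exact_mod_cast pos_of_mul_pos_left hqj (hc j).le
  refine ⟨n.toNat, by omega, ?_⟩
  rw [hn, mul_comm, ← Int.cast_natCast, Int.toNat_of_nonneg hn_pos.le]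

theorem ae_sum_grid_indicator_brick {c : ι → ℝ} (hc : ∀ j, 0 < c j) (n : ι → ℕ) :
    ∀ᵐ x : EuclideanSpace ℝ ι,
      ∑ k ∈ Fintype.piFinset (fun j => Finset.range (n j)),
          (brick c).indicator (fun _ => (1 : ℝ)) (x - WithLp.toLp 2 (fun j => c j * k j))
        = (brick fun j => c j * n j).indicator (fun _ => (1 : ℝ)) x := by
  filter_upwards [ae_all_iff.2 fun j =>
    ae_apply_of_ae (ae_sum_range_indicator_Ioo_sub_mul (hc j) (n j)) j] with x hx
  simp only [indicator_brick_apply, PiLp.sub_apply]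
  rw [Finset.prod_congr rfl fun j _ => (hx j).symm, Finset.prod_univ_sum]

end EuclideanSpace

theorem single_brick_tiles_box_general (d : ℕ)
    (c q : Fin d → ℝ) (hc : ∀ j, 0 < c j) (hq : ∀ j, 0 < q j)
    (Λ : Finset (EuclideanSpace ℝ (Fin d)))
    (htile : ∀ᵐ x : EuclideanSpace ℝ (Fin d),
      (∑ l ∈ Λ, ({y : EuclideanSpace ℝ (Fin d) | ∀ j, y j ∈ Set.Ioo 0 (c j)}).indicator
          (fun _ => (1 : ℝ)) (x - l)) =
      ({y : EuclideanSpace ℝ (Fin d) | ∀ j, y j ∈ Set.Ioo 0 (q j)}).indicator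
        (fun _ => (1 : ℝ)) x) :
    ∃ n : Fin d → ℕ,
      (∀ j, 0 < n j ∧ q j = c j * n j) ∧
      ∀ᵐ x : EuclideanSpace ℝ (Fin d),
        (∑ k ∈ Fintype.piFinset (fun j => Finset.range (n j)),
          ({y : EuclideanSpace ℝ (Fin d) | ∀ j, y j ∈ Set.Ioo 0 (c j)}).indicator
            (fun _ => (1 : ℝ)) (x - (show EuclideanSpace ℝ (Fin d) from WithLp.toLp 2 (fun j => c j * k j)))) =
        ({y : EuclideanSpace ℝ (Fin d) | ∀ j, y j ∈ Set.Ioo 0 (q j)}).indicator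
          (fun _ => (1 : ℝ)) x := by
  choose n hn_pos hqn using EuclideanSpace.exists_nat_eq_mul_of_tiling hc hq htile
  obtain rfl : q = fun j => c j * n j := funext hqn
  exact ⟨n, fun j => ⟨hn_pos j, rfl⟩,
    EuclideanSpace.ae_sum_grid_indicator_brick hc n⟩

/-- If translates of the single brick `C = ∏ (0, c j)` tile the box `Q = ∏ (0, q j)`,
then each `q j / c j` is a positive integer, and the grid tiling also tiles `Q`. -/
theorem single_brick_tiles_box (d : ℕ) (hd : 1 ≤ d)
    (c q : Fin d → ℝ) (hc : ∀ j, 0 < c j) (hq : ∀ j, 0 < q j)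
    (Λ : Finset (EuclideanSpace ℝ (Fin d)))
    (htile : ∀ᵐ x : EuclideanSpace ℝ (Fin d),
      (∑ l ∈ Λ, ({y : EuclideanSpace ℝ (Fin d) | ∀ j, y j ∈ Set.Ioo 0 (c j)}).indicator
          (fun _ => (1 : ℝ)) (x - l)) =
      ({y : EuclideanSpace ℝ (Fin d) | ∀ j, y j ∈ Set.Ioo 0 (q j)}).indicator
        (fun _ => (1 : ℝ)) x) :
    ∃ n : Fin d → ℕ,
      (∀ j, 0 < n j ∧ q j = c j * n j) ∧
      ∀ᵐ x : EuclideanSpace ℝ (Fin d),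
        (∑ k ∈ Fintype.piFinset (fun j => Finset.range (n j)),
          ({y : EuclideanSpace ℝ (Fin d) | ∀ j, y j ∈ Set.Ioo 0 (c j)}).indicator
            (fun _ => (1 : ℝ)) (x - (show EuclideanSpace ℝ (Fin d) from WithLp.toLp 2 (fun j => c j * k j)))) =
        ({y : EuclideanSpace ℝ (Fin d) | ∀ j, y j ∈ Set.Ioo 0 (q j)}).indicator
          (fun _ => (1 : ℝ)) x :=
  single_brick_tiles_box_general d c q hc hq Λ htile
end
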